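/- The parametric matroid M_X (with independent sets {I ⊆ U : R̲(I) ⊆ X}) is the direct sum of the partition-circuit matroid on U \ R̲(X) induced by the restriction of R, and the free matroid on R̲(X). Equivalently, I_X = {I₁ ∪ I₂ : I₁ ⊆ U \ R̲(X) with R̲(I₁) = ∅, and I₂ ⊆ R̲(X)}. -/

import Mathlib

/-! `R̲(X)` is a union of `R`-classes and `R̲` is idempotent, so `I ∖ R̲(X)` contains no whole class
once `R̲(I) ⊆ X`; conversely, a class inside `I₁ ∪ I₂` either meets `I₂ ⊆ R̲(X)`, and then lies in
`X`, or lies in `I₁`. -/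

open Finset

variable {α : Type*} [Fintype α] [DecidableEq α]

/-- The lower approximation of `S` w.r.t. the equivalence relation `R`:
`{x : [x]_R ⊆ S}`. -/
def lowerApprox (R : Setoid α) [DecidableRel R.r] (S : Finset α) : Finset α :=
  Finset.univ.filter fun x => ∀ y, R.r x y → y ∈ S

section LowerApprox

variable {R : Setoid α} [DecidableRel R.r] {S T : Finset α}

lemma mem_lowerApprox {x : α} : x ∈ lowerApprox R S ↔ ∀ y, R.r x y → y ∈ S := by
  simp [lowerApprox]

lemma lowerApprox_subset : lowerApprox R S ⊆ S :=
  fun x hx => mem_lowerApprox.mp hx x (R.refl x)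

lemma lowerApprox_mono (h : S ⊆ T) : lowerApprox R S ⊆ lowerApprox R T :=
  fun _ hx => mem_lowerApprox.mpr fun y hxy => h (mem_lowerApprox.mp hx y hxy)

lemma mem_lowerApprox_of_rel {x y : α} (hx : x ∈ lowerApprox R S) (hxy : R.r x y) :
    y ∈ lowerApprox R S :=
  mem_lowerApprox.mpr fun z hyz => mem_lowerApprox.mp hx z (R.trans hxy hyz)

@[simp]
lemma lowerApprox_lowerApprox : lowerApprox R (lowerApprox R S) = lowerApprox R S :=
  lowerApprox_subset.antisymm fun _ hx =>
    mem_lowerApprox.mpr fun _ hxy => mem_lowerApprox_of_rel hx hxy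

lemma lowerApprox_union_lowerApprox :
    lowerApprox R (S ∪ lowerApprox R T) = lowerApprox R S ∪ lowerApprox R T := by
  have hT : lowerApprox R T ⊆ lowerApprox R (S ∪ lowerApprox R T) := by
    simpa using lowerApprox_mono (R := R) (subset_union_right (s₁ := S) (s₂ := lowerApprox R T))
  refine Subset.antisymm (fun x hx => ?_) (union_subset (lowerApprox_mono subset_union_left) hT)
  by_cases hmeet : ∃ y, R.r x y ∧ y ∈ lowerApprox R T
  · obtain ⟨y, hxy, hy⟩ := hmeet
    exact mem_union_right _ (mem_lowerApprox_of_rel hy (R.symm hxy))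
  · refine mem_union_left _ (mem_lowerApprox.mpr fun y hxy => ?_)
    exact (mem_union.mp (mem_lowerApprox.mp hx y hxy)).resolve_right fun hy => hmeet ⟨y, hxy, hy⟩

lemma lowerApprox_sdiff_lowerApprox_eq_empty (h : lowerApprox R S ⊆ T) :
    lowerApprox R (S \ lowerApprox R T) = ∅ := by
  refine eq_empty_of_forall_notMem fun x hx => ?_
  have hxS : x ∈ lowerApprox R (lowerApprox R S) := by
    simpa using lowerApprox_mono (R := R) sdiff_subset hx
  have hxT : x ∈ lowerApprox R T := lowerApprox_mono h hxS
  exact (mem_sdiff.mp (lowerApprox_subset hx)).2 hxT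

end LowerApprox

theorem parametric_matroid_direct_sum_decomposition (R : Setoid α) [DecidableRel R.r]
    (X : Finset α) :
    ∀ I : Finset α, lowerApprox R I ⊆ X ↔
      ∃ I₁ I₂ : Finset α, I₁ ⊆ Finset.univ \ lowerApprox R X ∧ lowerApprox R I₁ = ∅ ∧
        I₂ ⊆ lowerApprox R X ∧ I = I₁ ∪ I₂ := by
  intro I
  constructor
  · intro hI
    exact ⟨I \ lowerApprox R X, I ∩ lowerApprox R X, sdiff_subset_sdiff (subset_univ I) le_rfl,
      lowerApprox_sdiff_lowerApprox_eq_empty hI, inter_subset_right, (sdiff_union_inter I _).symm⟩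
  · rintro ⟨I₁, I₂, -, hI₁, hI₂, rfl⟩
    calc lowerApprox R (I₁ ∪ I₂) ⊆ lowerApprox R (I₁ ∪ lowerApprox R X) :=
          lowerApprox_mono (union_subset_union le_rfl hI₂)
      _ = lowerApprox R X := by rw [lowerApprox_union_lowerApprox, hI₁, empty_union]
      _ ⊆ X := lowerApprox_subset
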